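/- The graph energy of the m-splitting graph Spl_m(G) equals √(4m+1) times the energy of G: E(Spl_m(G)) = √(4m+1)·E(G). -/

import Mathlib

/-!
The adjacency matrix of `Spl_m(G)` is `[[A, Q], [Qᵀ, 0]]` where `Q = [A ⋯ A]` has `m` blocks, so
`Q Qᵀ = m A²`. Eliminating the lower-left block gives the Schur complement `x (x - A) - m A²`,
which factors as `(x - a A)(x - b A)` with `a, b = (1 ± √(4m+1))/2` the roots of `t² - t - m`.
Hence, up to factors of `x`, the characteristic polynomial of `Spl_m(G)` is that of `a A` times
that of `b A`: its nonzero eigenvalues are the `a λᵢ` and the `b λᵢ`, and the energy is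
`(|a| + |b|) E(G) = √(4m+1) E(G)`.
-/

open Matrix Polynomial

namespace Matrix

variable {ι κ R : Type*}

def splitting (κ : Type*) [Zero R] (A : Matrix ι ι R) : Matrix (ι ⊕ κ × ι) (ι ⊕ κ × ι) R :=
  fromBlocks A (of fun i (p : κ × ι) => A i p.2) (of fun (p : κ × ι) j => A p.2 j) 0

lemma splitting_map {S : Type*} [Zero R] [Zero S] (A : Matrix ι ι R) (f : R → S) (hf : f 0 = 0) :
    (splitting κ A).map f = splitting κ (A.map f) := by
  ext (i | ⟨k, i⟩) (j | ⟨l, j⟩) <;> simp [splitting, hf]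

variable [Fintype ι] [Fintype κ] [DecidableEq ι] [DecidableEq κ] [CommRing R]

lemma det_scalar_sub_splitting_mul_pow (A : Matrix ι ι R) (x a b : R) (hab : a + b = 1)
    (hab' : a * b = -Fintype.card κ) :
    det (scalar _ x - splitting κ A) * x ^ Fintype.card ι
      = x ^ (Fintype.card κ * Fintype.card ι)
        * (det (scalar ι x - a • A) * det (scalar ι x - b • A)) := by
  set Q : Matrix ι (κ × ι) R := of fun i p => A i p.2
  set P : Matrix (κ × ι) ι R := of fun p j => A p.2 j
  have hQP : Q * P = (Fintype.card κ : R) • (A * A) := by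
    ext i j
    simp [Q, P, mul_apply, Fintype.sum_prod_type, Finset.mul_sum]
  have hblocks : scalar _ x - splitting κ A
      = fromBlocks (scalar ι x - A) (-Q) (-P) (scalar (κ × ι) x) := by
    ext (i | i) (j | j) <;> simp [splitting, Q, P, diagonal_apply]
  have hschur : (scalar ι x - A) * scalar ι x - Q * P
      = (scalar ι x - a • A) * (scalar ι x - b • A) := by
    rw [hQP, show scalar ι x = x • 1 by rw [scalar_apply, smul_one_eq_diagonal]]
    simp only [Matrix.sub_mul, Matrix.mul_sub, Matrix.smul_mul, Matrix.mul_smul, Matrix.one_mul,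
      Matrix.mul_one]
    match_scalars
    · ring
    · linear_combination x * hab
    · linear_combination -hab'
  have helim : fromBlocks (scalar ι x - A) (-Q) (-P) (scalar (κ × ι) x)
      * fromBlocks (scalar ι x) 0 P 1
      = fromBlocks ((scalar ι x - a • A) * (scalar ι x - b • A)) (-Q) 0 (scalar (κ × ι) x) := by
    rw [fromBlocks_multiply, ← hschur]
    congr 1
    · simp [sub_eq_add_neg]
    · simp
    · ext; simp [mul_comm]
    · simp
  have := congrArg det helim
  rw [det_mul, det_fromBlocks_zero₁₂, det_fromBlocks_zero₂₁, det_mul, ← hblocks] at this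
  simpa [Fintype.card_prod, mul_comm] using this

lemma charpoly_splitting (A : Matrix ι ι R) (a b : R) (hab : a + b = 1)
    (hab' : a * b = -Fintype.card κ) :
    X ^ Fintype.card ι * (splitting κ A).charpoly
      = X ^ (Fintype.card κ * Fintype.card ι) * ((a • A).charpoly * (b • A).charpoly) := by
  have hC (c : R) : (C : R →+* R[X]).mapMatrix (c • A) = C c • A.map C := by ext; simp
  simp only [charpoly, charmatrix, hC, RingHom.mapMatrix_apply, splitting_map _ _ (map_zero C)]
  rw [mul_comm]
  exact det_scalar_sub_splitting_mul_pow _ X (C a) (C b) (by rw [← C_add, hab, C_1])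
    (by rw [← C_mul, hab', C_neg, C_eq_natCast])

end Matrix

namespace Polynomial

noncomputable def sumAbsRoots (p : ℝ[X]) : ℝ := (p.roots.map (|·|)).sum

lemma sumAbsRoots_mul {p q : ℝ[X]} (hp : p ≠ 0) (hq : q ≠ 0) :
    sumAbsRoots (p * q) = sumAbsRoots p + sumAbsRoots q := by
  simp [sumAbsRoots, roots_mul (mul_ne_zero hp hq)]

lemma sumAbsRoots_X_pow_mul (k : ℕ) {p : ℝ[X]} (hp : p ≠ 0) :
    sumAbsRoots (X ^ k * p) = sumAbsRoots p := by
  rw [sumAbsRoots_mul (pow_ne_zero k X_ne_zero) hp]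
  simp [sumAbsRoots, Multiset.nsmul_singleton]

end Polynomial

namespace Matrix.IsHermitian

variable {ι : Type*} [Fintype ι] [DecidableEq ι] {A : Matrix ι ι ℝ}

lemma sumAbsRoots_charpoly_smul (hA : A.IsHermitian) (c : ℝ) :
    (c • A).charpoly.sumAbsRoots = |c| * ∑ i, |hA.eigenvalues i| := by
  have hchar : (c • A).charpoly = ∏ i, (X - C (c * hA.eigenvalues i)) := by
    rw [← cfc_const_mul_id c A hA.isSelfAdjoint, hA.charpoly_cfc_eq]
    rfl
  rw [sumAbsRoots, hchar,
    roots_prod _ _ (Finset.prod_ne_zero_iff.mpr fun i _ => X_sub_C_ne_zero _)]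
  simp only [roots_X_sub_C, Multiset.bind_singleton, Multiset.map_map]
  simp [Finset.mul_sum, abs_mul]

lemma sumAbsRoots_charpoly (hA : A.IsHermitian) :
    A.charpoly.sumAbsRoots = ∑ i, |hA.eigenvalues i| := by
  simpa using hA.sumAbsRoots_charpoly_smul 1

end Matrix.IsHermitian

theorem stmt_16_general (n m : ℕ)
    (A : Matrix (Fin n) (Fin n) ℝ) (hA : A.IsHermitian)
    (B : Matrix (Fin n ⊕ Fin m × Fin n) (Fin n ⊕ Fin m × Fin n) ℝ)
    (hBdef : B = Matrix.fromBlocks A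
      (Matrix.of fun i (p : Fin m × Fin n) => A i p.2)
      (Matrix.of fun (p : Fin m × Fin n) j => A p.2 j)
      0)
    (hB : B.IsHermitian) :
    ∑ p, |hB.eigenvalues p| = Real.sqrt (4 * m + 1) * ∑ i, |hA.eigenvalues i| := by
  set s := Real.sqrt (4 * m + 1)
  have hs_sq : s ^ 2 = 4 * m + 1 := Real.sq_sqrt (by positivity)
  have hs_one : 1 ≤ s := Real.one_le_sqrt.mpr (by linarith [m.cast_nonneg (α := ℝ)])
  have hchar := charpoly_splitting (κ := Fin m) A ((1 + s) / 2) ((1 - s) / 2) (by ring)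
    (by simp only [Fintype.card_fin]; linear_combination -hs_sq / 4)
  rw [show splitting (Fin m) A = B from hBdef.symm] at hchar
  have hsum := congrArg sumAbsRoots hchar
  rw [sumAbsRoots_X_pow_mul _ (charpoly_monic _).ne_zero,
    sumAbsRoots_X_pow_mul _ ((charpoly_monic _).mul (charpoly_monic _)).ne_zero,
    sumAbsRoots_mul (charpoly_monic _).ne_zero (charpoly_monic _).ne_zero,
    hB.sumAbsRoots_charpoly, hA.sumAbsRoots_charpoly_smul, hA.sumAbsRoots_charpoly_smul] at hsum
  rw [hsum, abs_of_nonneg (by linarith), abs_of_nonpos (by linarith)]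
  ring

theorem stmt_16 (n m : ℕ) (hm : 1 ≤ m)
    (A : Matrix (Fin n) (Fin n) ℝ) (hA : A.IsHermitian)
    (B : Matrix (Fin n ⊕ Fin m × Fin n) (Fin n ⊕ Fin m × Fin n) ℝ)
    (hBdef : B = Matrix.fromBlocks A
      (Matrix.of fun i (p : Fin m × Fin n) => A i p.2)
      (Matrix.of fun (p : Fin m × Fin n) j => A p.2 j)
      0)
    (hB : B.IsHermitian) :
    ∑ p, |hB.eigenvalues p| = Real.sqrt (4 * m + 1) * ∑ i, |hA.eigenvalues i| :=
  stmt_16_general n m A hA B hBdef hB
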